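/- For n even and 0 ≤ T ≤ n/2, consider complete contractions of the form C = contr(∇²_{a₁b₁}φ ⊗ … ⊗ ∇²_{a_{n/2−T}b_{n/2−T}}φ ⊗ (Δφ)^T) on ℝ^n, where no factor ∇²φ among the first n/2−T is a pure trace Δφ. Evaluating such a contraction with the Hessian ∇²φ replaced by a symmetric matrix H (a pointwise algebraic substitution), the number T of trace factors tr(H) appearing is well-defined: two such contraction patterns with different values of T give linearly independent polynomial functions of the symmetric matrix H (for n ≥ 2). -/

import Mathlib

/-!
Evaluate both contractions at `H = diag(t, 1, 0, …, 0)`. Then `tr(Hᶜ) = tᶜ + 1`, so a pattern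
with cycle lengths `μ` becomes the polynomial `∏_{c ∈ μ} (Xᶜ + 1) = 1 + T·X + O(X²)` in `t`, where
`T` is the number of trace factors (cycles of length 1). A vanishing combination `a·f_μ + b·f_ν`
thus forces `a + b = 0` (constant terms) and `a·T_μ + b·T_ν = 0` (linear terms), hence
`a = b = 0` when `T_μ ≠ T_ν`.
-/

open Polynomial Matrix

theorem Matrix.trace_diagonal_single_add_single_pow {ι R : Type*} [Fintype ι] [DecidableEq ι]
    [CommSemiring R] {i j : ι} (hij : i ≠ j) (s t : R) {c : ℕ} (hc : c ≠ 0) :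
    (diagonal (Pi.single i s + Pi.single j t) ^ c).trace = s ^ c + t ^ c := by
  rw [diagonal_pow, trace_diagonal,
    Fintype.sum_eq_add i j hij fun k hk => by simp [hk.1, hk.2, zero_pow hc]]
  simp [hij, hij.symm]

theorem multiset_prod_trace_diagonal_single_add_single_pow {ι R : Type*} [Fintype ι]
    [DecidableEq ι] [CommRing R] {i j : ι} (hij : i ≠ j) {σ : Multiset ℕ}
    (hσ : ∀ c ∈ σ, 1 ≤ c) (t : R) :
    (σ.map fun c => (diagonal (Pi.single i t + Pi.single j 1) ^ c).trace).prod
      = ((σ.map fun c => (X : R[X]) ^ c + 1).prod).eval t := by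
  rw [eval_multiset_prod, Multiset.map_map]
  refine congrArg Multiset.prod (Multiset.map_congr rfl fun c hc => ?_)
  rw [trace_diagonal_single_add_single_pow hij t 1 (Nat.one_le_iff_ne_zero.mp (hσ c hc))]
  simp

section MultisetProdXPowAddOne

variable {R : Type*} [CommRing R] {μ : Multiset ℕ}

theorem eval_zero_multiset_prod_X_pow_add_one (hμ : ∀ c ∈ μ, 1 ≤ c) :
    ((μ.map fun c => (X : R[X]) ^ c + 1).prod).eval 0 = 1 := by
  rw [eval_multiset_prod, Multiset.map_map]
  refine Multiset.prod_eq_one fun x hx => ?_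
  obtain ⟨c, hc, rfl⟩ := Multiset.mem_map.mp hx
  simp [zero_pow (Nat.one_le_iff_ne_zero.mp (hμ c hc))]

theorem eval_zero_derivative_X_pow_add_one {c : ℕ} (hc : 1 ≤ c) :
    (derivative ((X : R[X]) ^ c + 1)).eval 0 = if c = 1 then 1 else 0 := by
  obtain rfl | hc := hc.eq_or_lt
  · simp
  · simp [derivative_X_pow, zero_pow (by omega : c - 1 ≠ 0), hc.ne']

theorem eval_zero_derivative_multiset_prod_X_pow_add_one (hμ : ∀ c ∈ μ, 1 ≤ c) :
    (derivative (μ.map fun c => (X : R[X]) ^ c + 1).prod).eval 0 = μ.count 1 := by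
  induction μ using Multiset.induction with
  | empty => simp
  | cons c s ih =>
    have hs : ∀ x ∈ s, 1 ≤ x := fun x hx => hμ x (Multiset.mem_cons_of_mem hx)
    have hc : 1 ≤ c := hμ c (Multiset.mem_cons_self c s)
    have hXc : ((X : R[X]) ^ c + 1).eval 0 = 1 := by
      simp [zero_pow (Nat.one_le_iff_ne_zero.mp hc)]
    simp only [Multiset.map_cons, Multiset.prod_cons, derivative_mul, eval_add, eval_mul,
      eval_zero_derivative_X_pow_add_one hc, eval_zero_multiset_prod_X_pow_add_one hs, hXc,
      ih hs, Multiset.count_cons]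
    rcases eq_or_ne c 1 with rfl | hc1
    · push_cast; ring
    · simp [hc1, Ne.symm hc1]

end MultisetProdXPowAddOne

theorem linearIndependent_multiset_prod_X_pow_add_one {K : Type*} [Field K] [CharZero K]
    {μ ν : Multiset ℕ} (hμ : ∀ c ∈ μ, 1 ≤ c) (hν : ∀ c ∈ ν, 1 ≤ c)
    (hT : μ.count 1 ≠ ν.count 1) :
    LinearIndependent K
      ![(μ.map fun c => (X : K[X]) ^ c + 1).prod, (ν.map fun c => (X : K[X]) ^ c + 1).prod] := by
  rw [LinearIndependent.pair_iff]
  intro a b hab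
  have hconst : a + b = 0 := by
    have := congrArg (eval 0) hab
    rwa [eval_add, eval_smul, eval_smul, eval_zero_multiset_prod_X_pow_add_one hμ,
      eval_zero_multiset_prod_X_pow_add_one hν, eval_zero, smul_eq_mul, smul_eq_mul, mul_one,
      mul_one] at this
  have hlin : a * μ.count 1 + b * ν.count 1 = 0 := by
    have := congrArg (fun p => (derivative p).eval 0) hab
    simp only [derivative_add, derivative_smul, eval_add, eval_smul, derivative_zero, eval_zero,
      smul_eq_mul] at this
    rwa [eval_zero_derivative_multiset_prod_X_pow_add_one hμ,
      eval_zero_derivative_multiset_prod_X_pow_add_one hν] at this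
  have hcount : (μ.count 1 : K) - ν.count 1 ≠ 0 := sub_ne_zero.mpr (by exact_mod_cast hT)
  have ha : a = 0 := by
    refine (mul_eq_zero.mp ?_).resolve_right hcount
    linear_combination hlin - (ν.count 1 : K) * hconst
  exact ⟨ha, by linear_combination hconst - ha⟩

theorem trace_count_linear_independence_general (n : ℕ) (h2 : 2 ≤ n)
    (μ ν : Multiset ℕ)
    (hμ1 : ∀ c ∈ μ, 1 ≤ c) (hν1 : ∀ c ∈ ν, 1 ≤ c)
    (hT : μ.count 1 ≠ ν.count 1) :
    LinearIndependent ℝ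
      ![(fun H : {H : Matrix (Fin n) (Fin n) ℝ // H.IsSymm} =>
          (μ.map fun c => (H.1 ^ c).trace).prod),
        (fun H : {H : Matrix (Fin n) (Fin n) ℝ // H.IsSymm} =>
          (ν.map fun c => (H.1 ^ c).trace).prod)] := by
  obtain ⟨i, j, hij⟩ : ∃ i j : Fin n, i ≠ j :=
    ⟨⟨0, by omega⟩, ⟨1, by omega⟩, by simp [Fin.ext_iff]⟩
  rw [LinearIndependent.pair_iff]
  intro a b hab
  refine LinearIndependent.pair_iff.mp
    (linearIndependent_multiset_prod_X_pow_add_one hμ1 hν1 hT) a b (Polynomial.funext fun t => ?_)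
  have h := congrFun hab ⟨diagonal (Pi.single i t + Pi.single j 1), isSymm_diagonal _⟩
  simp only [Pi.add_apply, Pi.smul_apply, Pi.zero_apply,
    multiset_prod_trace_diagonal_single_add_single_pow hij hμ1,
    multiset_prod_trace_diagonal_single_add_single_pow hij hν1] at h
  simpa only [eval_add, eval_smul, eval_zero] using h

/-- Complete contraction patterns of `n/2` symmetric 2-tensors `H` on `ℝⁿ`
correspond to multisets of cycle lengths (with value `∏ tr(H^c)`); a factor is a
trace factor `tr H` exactly when its cycle has length 1.  Two such contraction
patterns with different numbers `T` of trace factors give linearly independent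
polynomial functions of the symmetric matrix `H`, for `n ≥ 2` even. -/
theorem trace_count_linear_independence (n : ℕ) (hn : Even n) (h2 : 2 ≤ n)
    (μ ν : Multiset ℕ)
    (hμ1 : ∀ c ∈ μ, 1 ≤ c) (hν1 : ∀ c ∈ ν, 1 ≤ c)
    (hμs : μ.sum = n / 2) (hνs : ν.sum = n / 2)
    (hT : μ.count 1 ≠ ν.count 1) :
    LinearIndependent ℝ
      ![(fun H : {H : Matrix (Fin n) (Fin n) ℝ // H.IsSymm} =>
          (μ.map fun c => (H.1 ^ c).trace).prod),
        (fun H : {H : Matrix (Fin n) (Fin n) ℝ // H.IsSymm} =>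
          (ν.map fun c => (H.1 ^ c).trace).prod)] :=
  trace_count_linear_independence_general n h2 μ ν hμ1 hν1 hT
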